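/- If the nonexistence of a quasi-symmetric 2-(56,12,9) design with block intersection numbers 0 and 3 is assumed, then no quasi-symmetric 2-(57,12,11) design with block intersection numbers 0 and 3 exists. -/

import Mathlib

/-- A `t`-`(v,k,lam)` design: `X` is the point set with `v` points, blocks are indexed by the
finite index set `b`, each block `blk i` is a `k`-subset of `X`, and every `t`-subset of `X`
is contained in exactly `lam` blocks. -/
def IsDesign {α ι : Type*} [DecidableEq α] (X : Finset α) (b : Finset ι)
    (blk : ι → Finset α) (v k t lam : ℕ) : Prop :=
  X.card = v ∧ (∀ i ∈ b, blk i ⊆ X ∧ (blk i).card = k) ∧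
    ∀ T ⊆ X, T.card = t → (b.filter fun i => T ⊆ blk i).card = lam

/-!
Fix a pair `T` of points. Any two of the 11 blocks through `T` meet in 3 points, so off `T` they are
10-sets pairwise meeting in exactly one point. On the remaining 55 points, the number of these
blocks through a point has mean `110 / 55 = 2` and second moment `220 / 55 = 4`, hence zero
variance: every point `p ∉ T` lies in exactly 2 blocks through `T`. So the number of blocks
through a triple is constant, and the blocks avoiding a point form a 2-(56,12,9) design on the
remaining points, still with intersection numbers 0 and 3.
-/

open Finset

def HasIntersectionNumbers {α ι : Type*} [DecidableEq α] (b : Finset ι) (blk : ι → Finset α)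
    (x y : ℕ) : Prop :=
  ∀ i ∈ b, ∀ j ∈ b, i ≠ j → #(blk i ∩ blk j) = x ∨ #(blk i ∩ blk j) = y

theorem eq_of_sum_eq_of_sum_sq_eq {α : Type*} {S : Finset α} {f : α → ℕ} {c : ℕ}
    (h₁ : ∑ q ∈ S, f q = #S * c) (h₂ : ∑ q ∈ S, f q ^ 2 = #S * c ^ 2) : ∀ q ∈ S, f q = c := by
  have hvar : ∑ q ∈ S, ((f q : ℤ) - c) ^ 2 = 0 := by
    have h₁' : ∑ q ∈ S, (f q : ℤ) = #S * c := by exact_mod_cast h₁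
    have h₂' : ∑ q ∈ S, (f q : ℤ) ^ 2 = #S * c ^ 2 := by exact_mod_cast h₂
    simp only [sub_sq, sum_add_distrib, sum_sub_distrib, sum_const, nsmul_eq_mul, ← sum_mul,
      ← mul_sum, h₁', h₂']
    ring
  intro q hq
  have hsq := (sum_eq_zero_iff_of_nonneg fun q _ => sq_nonneg ((f q : ℤ) - c)).1 hvar q hq
  have hdev := pow_eq_zero_iff (n := 2) two_ne_zero |>.1 hsq
  omega

section Counting

variable {α ι : Type*} [DecidableEq α] {S : Finset α} {B : Finset ι} {A : ι → Finset α}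

theorem sum_card_filter_mem (hAS : ∀ i ∈ B, A i ⊆ S) :
    ∑ q ∈ S, #{i ∈ B | q ∈ A i} = ∑ i ∈ B, #(A i) := by
  simp_rw [card_filter]
  rw [sum_comm]
  refine sum_congr rfl fun i hi => ?_
  rw [← card_filter, filter_mem_eq_inter, inter_eq_right.2 (hAS i hi)]

theorem sum_card_filter_mem_sq (hAS : ∀ i ∈ B, A i ⊆ S) :
    ∑ q ∈ S, #{i ∈ B | q ∈ A i} ^ 2 = ∑ i ∈ B, ∑ j ∈ B, #(A i ∩ A j) := by
  simp_rw [card_filter, sq, sum_mul_sum, ite_zero_mul_ite_zero, mul_one, ← mem_inter]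
  rw [sum_comm]
  refine sum_congr rfl fun i hi => ?_
  rw [sum_comm]
  refine sum_congr rfl fun j _ => ?_
  rw [← card_filter, filter_mem_eq_inter, inter_eq_right.2 (inter_subset_left.trans (hAS i hi))]

theorem card_filter_mem_eq_of_card_inter_eq {r μ c : ℕ} (hAS : ∀ i ∈ B, A i ⊆ S)
    (hA : ∀ i ∈ B, #(A i) = r) (hAA : ∀ i ∈ B, ∀ j ∈ B, i ≠ j → #(A i ∩ A j) = μ)
    (h₁ : #B * r = #S * c) (h₂ : #B * (r + (#B - 1) * μ) = #S * c ^ 2) :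
    ∀ q ∈ S, #{i ∈ B | q ∈ A i} = c := by
  classical
  refine eq_of_sum_eq_of_sum_sq_eq ?_ ?_
  · rw [sum_card_filter_mem hAS, sum_congr rfl hA, sum_const, smul_eq_mul, h₁]
  · rw [sum_card_filter_mem_sq hAS, ← h₂, ← smul_eq_mul, ← sum_const]
    refine sum_congr rfl fun i hi => ?_
    rw [← add_sum_erase _ _ hi, inter_self, hA i hi,
      sum_congr rfl fun j hj => hAA i hi j (mem_of_mem_erase hj) (ne_of_mem_erase hj).symm,
      sum_const, smul_eq_mul, card_erase_of_mem hi]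

end Counting

theorem card_preimage_of_subset_map {α β : Type*} {e : β ↪ α} {s : Finset α} {t : Finset β}
    (hs : s ⊆ t.map e) : #(s.preimage e e.injective.injOn) = #s := by
  obtain ⟨u, -, rfl⟩ := subset_map_iff.1 hs
  rw [preimage_map, card_map]

section Designs

variable {α ι : Type*} [DecidableEq α] {X : Finset α} {b : Finset ι} {blk : ι → Finset α}

theorem HasIntersectionNumbers.mono {x y : ℕ} (h : HasIntersectionNumbers b blk x y)
    {b' : Finset ι} (hb : b' ⊆ b) : HasIntersectionNumbers b' blk x y :=
  fun i hi j hj => h i (hb hi) j (hb hj)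

theorem HasIntersectionNumbers.comap {β : Type*} [DecidableEq β] [Fintype β] {x y : ℕ}
    (h : HasIntersectionNumbers b blk x y) (e : β ↪ α) (hblk : ∀ i ∈ b, blk i ⊆ univ.map e) :
    HasIntersectionNumbers b (fun i => (blk i).preimage e e.injective.injOn) x y := by
  intro i hi j hj hij
  rw [← preimage_inter, card_preimage_of_subset_map (inter_subset_left.trans (hblk i hi))]
  exact h i hi j hj hij

namespace IsDesign

variable {v k t lam : ℕ}

theorem comap {β : Type*} [DecidableEq β] [Fintype β] (h : IsDesign X b blk v k t lam)
    (e : β ↪ α) (hX : X = univ.map e) :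
    IsDesign univ b (fun i => (blk i).preimage e e.injective.injOn) v k t lam := by
  obtain ⟨hv, hblk, hpair⟩ := h
  refine ⟨by rw [← card_map e, ← hX, hv], fun i hi => ?_, fun T _ hT => ?_⟩
  · exact ⟨subset_univ _, by rw [card_preimage_of_subset_map (hX ▸ (hblk i hi).1), (hblk i hi).2]⟩
  · rw [← hpair (T.map e) (hX ▸ map_subset_map.2 (subset_univ T)) (by rw [card_map, hT])]
    simp_rw [← map_subset_iff_subset_preimage]

theorem residual (h : IsDesign X b blk v k t lam) {p : α} (hp : p ∈ X) {μ : ℕ}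
    (hμ : ∀ T ⊆ X.erase p, #T = t → #{i ∈ b | p ∈ blk i ∧ T ⊆ blk i} = μ) :
    IsDesign (X.erase p) {i ∈ b | p ∉ blk i} blk (v - 1) k t (lam - μ) := by
  obtain ⟨hv, hblk, hpair⟩ := h
  refine ⟨by rw [card_erase_of_mem hp, hv], fun i hi => ?_, fun T hTX hT => ?_⟩
  · obtain ⟨hib, hpi⟩ := mem_filter.1 hi
    exact ⟨subset_erase.2 ⟨(hblk i hib).1, hpi⟩, (hblk i hib).2⟩
  · have hsplit := card_filter_add_card_filter_not (s := {i ∈ b | T ⊆ blk i}) (p ∈ blk ·)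
    rw [hpair T (hTX.trans (erase_subset p X)) hT] at hsplit
    simp only [filter_filter, and_comm (a := T ⊆ _), hμ T hTX hT] at hsplit ⊢
    omega

theorem card_filter_mem_and_subset_eq_two (h : IsDesign X b blk 57 12 2 11)
    (hqs : HasIntersectionNumbers b blk 0 3) {T : Finset α} (hTX : T ⊆ X) (hT : #T = 2)
    {p : α} (hp : p ∈ X) (hpT : p ∉ T) : #{i ∈ b | p ∈ blk i ∧ T ⊆ blk i} = 2 := by
  obtain ⟨hv, hblk, hpair⟩ := h
  have hB : #{i ∈ b | T ⊆ blk i} = 11 := hpair T hTX hT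
  have hS : #(X \ T) = 55 := by rw [card_sdiff_of_subset hTX, hv, hT]
  have hA : ∀ i ∈ {i ∈ b | T ⊆ blk i}, #(blk i \ T) = 10 := by
    intro i hi
    obtain ⟨hib, hTi⟩ := mem_filter.1 hi
    rw [card_sdiff_of_subset hTi, (hblk i hib).2, hT]
  have hAA : ∀ i ∈ {i ∈ b | T ⊆ blk i}, ∀ j ∈ {i ∈ b | T ⊆ blk i}, i ≠ j →
      #(blk i \ T ∩ (blk j \ T)) = 1 := by
    intro i hi j hj hij
    obtain ⟨hib, hTi⟩ := mem_filter.1 hi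
    obtain ⟨hjb, hTj⟩ := mem_filter.1 hj
    have hTij : T ⊆ blk i ∩ blk j := subset_inter hTi hTj
    have h3 : #(blk i ∩ blk j) = 3 := by
      have := card_le_card hTij
      rcases hqs i hib j hjb hij with h | h <;> omega
    rw [show blk i \ T ∩ (blk j \ T) = (blk i ∩ blk j) \ T from inf_sdiff.symm,
      card_sdiff_of_subset hTij, h3, hT]
  have hcount := card_filter_mem_eq_of_card_inter_eq (c := 2)
    (fun i hi => sdiff_subset_sdiff (hblk i (mem_filter.1 hi).1).1 le_rfl) hA hAA
    (by rw [hB, hS]) (by rw [hB, hS]; rfl) p (mem_sdiff.2 ⟨hp, hpT⟩)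
  simpa only [filter_filter, mem_sdiff, hpT, not_false_eq_true, and_true, true_and, and_comm]
    using hcount

end IsDesign

end Designs

/-- If no quasi-symmetric 2-(56,12,9) design with block intersection numbers 0 and 3 exists,
then no quasi-symmetric 2-(57,12,11) design with block intersection numbers 0 and 3 exists. -/
theorem no_qs_57_of_no_qs_56
    (h56 : ∀ (ι : Type) (b : Finset ι) (blk : ι → Finset (Fin 56)),
      ¬ (IsDesign Finset.univ b blk 56 12 2 9 ∧
        ∀ i ∈ b, ∀ j ∈ b, i ≠ j →
          (blk i ∩ blk j).card = 0 ∨ (blk i ∩ blk j).card = 3)) :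
    ∀ (ι : Type) (b : Finset ι) (blk : ι → Finset (Fin 57)),
      ¬ (IsDesign Finset.univ b blk 57 12 2 11 ∧
        ∀ i ∈ b, ∀ j ∈ b, i ≠ j →
          (blk i ∩ blk j).card = 0 ∨ (blk i ∩ blk j).card = 3) := by
  rintro ι b blk ⟨hD, hqs⟩
  have hres : IsDesign (univ.erase (Fin.last 56)) {i ∈ b | Fin.last 56 ∉ blk i} blk 56 12 2 9 :=
    hD.residual (mem_univ _) fun T hT hT2 =>
      hD.card_filter_mem_and_subset_eq_two hqs (subset_univ T) hT2 (mem_univ _)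
        fun hpT => notMem_erase _ _ (hT hpT)
  have hX : univ.erase (Fin.last 56) = univ.map Fin.castSuccEmb := by
    rw [Fin.univ_castSuccEmb, erase_cons]
  exact h56 ι _ _ ⟨hres.comap Fin.castSuccEmb hX,
    (HasIntersectionNumbers.mono hqs (filter_subset _ b)).comap Fin.castSuccEmb
      fun i hi => hX ▸ (hres.2.1 i hi).1⟩
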